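/- arXiv:1904.11632 — 2 statements merged into one kernel-verified Lean document; each statement's English description precedes it below -/
import Mathlib

section
/- Under the product uncertainty assumption, with factorized uncertain variables X(1:n), Y(1:n) and 0 ≤ δ < min_{i, x(i)} m_𝒴(⟦Y(i)|x(i)⟧), every set 𝒮 = 𝒮₁ × ⋯ × 𝒮ₙ in the product family ∏_{i=1}^n ⟦Y(i)|X(i)⟧*_δ is δⁿ-connected via ⟦Y(1:n)|X(1:n)⟧ and contains at least one singly δⁿ-connected set of the form ⟦Y(1:n)|x(1:n)⟧. -/
open Set Real

namespace NSIT

variable {Ω 𝒳 𝒴 : Type*}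

/-- The conditional range `⟦X|y⟧` of an uncertain variable `X` given that the
uncertain variable `Y` takes the value `y`. -/
def condRange (X : Ω → 𝒳) (Y : Ω → 𝒴) (y : 𝒴) : Set 𝒳 :=
  X '' {ω | Y ω = y}

/-- `m` is an uncertainty function: it vanishes on the empty set, is positive (and
finite, being real-valued) on nonempty sets, and is strongly transitive. -/
def IsUncertaintyFn (m : Set 𝒳 → ℝ) : Prop :=
  m ∅ = 0 ∧ (∀ S : Set 𝒳, S.Nonempty → 0 < m S) ∧
    ∀ S₁ S₂ : Set 𝒳, max (m S₁) (m S₂) ≤ m (S₁ ∪ S₂)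

/-- The set of association `𝒜(X;Y)`: all nonzero relative uncertainties of
intersections of two distinct conditional ranges of `X` given values of `Y`. -/
def assocSet (mX : Set 𝒳 → ℝ) (X : Ω → 𝒳) (Y : Ω → 𝒴) : Set ℝ :=
  {r | r ≠ 0 ∧ ∃ y₁ ∈ Set.range Y, ∃ y₂ ∈ Set.range Y, y₁ ≠ y₂ ∧
    r = mX (condRange X Y y₁ ∩ condRange X Y y₂) / mX (Set.range X)}

/-- `X` and `Y` are associated at levels `(δ₁, δ₂)`:
`𝒜(X;Y) ⪯ δ₁` and `𝒜(Y;X) ⪯ δ₂` (vacuously true for empty association sets). -/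
def Associated (mX : Set 𝒳 → ℝ) (mY : Set 𝒴 → ℝ) (X : Ω → 𝒳) (Y : Ω → 𝒴)
    (δ₁ δ₂ : ℝ) : Prop :=
  (∀ r ∈ assocSet mX X Y, r ≤ δ₁) ∧ ∀ r ∈ assocSet mY Y X, r ≤ δ₂

/-- `X` and `Y` are disassociated at levels `(δ₁, δ₂)`:
`𝒜(X;Y) ≻ δ₁` and `𝒜(Y;X) ≻ δ₂` (which in particular requires the association
sets to be nonempty). -/
def Disassociated (mX : Set 𝒳 → ℝ) (mY : Set 𝒴 → ℝ) (X : Ω → 𝒳) (Y : Ω → 𝒴)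
    (δ₁ δ₂ : ℝ) : Prop :=
  (assocSet mX X Y).Nonempty ∧ (∀ r ∈ assocSet mX X Y, δ₁ < r) ∧
    (assocSet mY Y X).Nonempty ∧ ∀ r ∈ assocSet mY Y X, δ₂ < r

/-- `x₁` and `x₂` are `δ`-connected via `⟦X|Y⟧`: there is a finite chain of
conditional ranges joining them whose consecutive intersections have relative
uncertainty greater than `δ`. -/
def Conn (mX : Set 𝒳 → ℝ) (X : Ω → 𝒳) (Y : Ω → 𝒴) (δ : ℝ) (x₁ x₂ : 𝒳) : Prop :=
  ∃ (N : ℕ) (ys : Fin (N + 1) → 𝒴),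
    x₁ ∈ condRange X Y (ys 0) ∧ x₂ ∈ condRange X Y (ys (Fin.last N)) ∧
    ∀ i : Fin N,
      δ < mX (condRange X Y (ys i.succ) ∩ condRange X Y (ys i.castSucc)) /
        mX (Set.range X)

/-- `F` is a `δ`-overlap family (for `X` given `Y`): it covers `⟦X⟧`, each member
is `δ`-connected and contains a singly `δ`-connected set of the form `⟦X|y⟧`,
any two distinct members overlap with uncertainty at most `δ · m(⟦X⟧)`, and every
conditional range `⟦X|y⟧` is contained in some member. -/
def IsOverlapFamily (mX : Set 𝒳 → ℝ) (X : Ω → 𝒳) (Y : Ω → 𝒴) (δ : ℝ)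
    (F : Set (Set 𝒳)) : Prop :=
  ⋃₀ F = Set.range X ∧
  (∀ S ∈ F, (∀ x₁ ∈ S, ∀ x₂ ∈ S, Conn mX X Y δ x₁ x₂) ∧
    ∃ y ∈ Set.range Y, condRange X Y y ⊆ S) ∧
  (∀ S₁ ∈ F, ∀ S₂ ∈ F, S₁ ≠ S₂ → mX (S₁ ∩ S₂) ≤ δ * mX (Set.range X)) ∧
  ∀ y ∈ Set.range Y, ∃ S ∈ F, condRange X Y y ⊆ S

/-!
A chain in the product is built one coordinate at a time: while coordinate `j` follows a
chain of conditional ranges of `Y(j)`, every other coordinate `i` stays at a fixed `x(i)`,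
and this is harmless because the self-overlap `m(⟦Y(i)|x(i)⟧) / m(⟦Y(i)⟧)` exceeds `δ`
(as `m(⟦Y(i)⟧) ≤ 1`). A product box each of whose sides has relative uncertainty above `δ`
has relative uncertainty above `δⁿ`, by the product rule and `⟦Y(1:n)⟧ ⊆ ∏ᵢ ⟦Y(i)⟧`.
-/

end NSIT

open Relation

lemma Finset.prod_lt_prod_of_nonempty_of_nonneg {ι R : Type*} [CommMonoidWithZero R]
    [PartialOrder R] [ZeroLEOneClass R] [PosMulStrictMono R] [Nontrivial R]
    {f g : ι → R} {s : Finset ι} (hf : ∀ i ∈ s, 0 ≤ f i) (hfg : ∀ i ∈ s, f i < g i)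
    (hs : s.Nonempty) : ∏ i ∈ s, f i < ∏ i ∈ s, g i := by
  by_cases hzero : ∃ i ∈ s, f i = 0
  · obtain ⟨i, hi, hfi⟩ := hzero
    rw [Finset.prod_eq_zero hi hfi]
    exact Finset.prod_pos fun i hi => (hf i hi).trans_lt (hfg i hi)
  · push Not at hzero
    exact Finset.prod_lt_prod_of_nonempty
      (fun i hi => (hf i hi).lt_of_ne (hzero i hi).symm) hfg hs

theorem Relation.reflTransGen_iff_exists_fin_chain {α : Type*} {r : α → α → Prop} {a b : α} :
    ReflTransGen r a b ↔ ∃ (N : ℕ) (f : Fin (N + 1) → α),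
      f 0 = a ∧ f (Fin.last N) = b ∧ ∀ i : Fin N, r (f i.castSucc) (f i.succ) := by
  constructor
  · intro h
    induction h with
    | refl => exact ⟨0, fun _ => a, rfl, rfl, Fin.elim0⟩
    | @tail c d _ hcd ih =>
      obtain ⟨N, f, hf0, hfN, hf⟩ := ih
      refine ⟨N + 1, Fin.snoc f d, by simpa using hf0, by simp, Fin.lastCases ?_ fun i => ?_⟩
      · simpa [hfN] using hcd
      · rw [Fin.succ_castSucc, Fin.snoc_castSucc, Fin.snoc_castSucc]
        exact hf i
  · rintro ⟨N, f, rfl, rfl, hf⟩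
    induction N with
    | zero => rfl
    | succ N ih =>
      exact (ih (Fin.init f) fun i => by simpa [Fin.init] using hf i.castSucc).tail
        (hf (Fin.last N))

theorem Relation.ReflTransGen.pi {ι : Type*} [Fintype ι] {α : ι → Type*}
    {r : ∀ i, α i → α i → Prop} {u v : ∀ i, α i} (hu : ∀ i, r i (u i) (u i))
    (hv : ∀ i, r i (v i) (v i)) (h : ∀ i, ReflTransGen (r i) (u i) (v i)) :
    ReflTransGen (fun a b => ∀ i, r i (a i) (b i)) u v := by
  classical
  suffices ∀ s : Finset ι, ReflTransGen (fun a b => ∀ i, r i (a i) (b i)) u (s.piecewise v u) by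
    simpa using this Finset.univ
  intro s
  induction s using Finset.induction_on with
  | empty => rw [Finset.piecewise_empty]
  | insert j s hj ih =>
    set w := s.piecewise v u
    have hw : ∀ i, r i (w i) (w i) := fun i => by
      by_cases hi : i ∈ s <;> simp [w, hi, hu i, hv i]
    have hmove :
        ReflTransGen (fun a b => ∀ i, r i (a i) (b i)) w (Function.update w j (v j)) := by
      have := ReflTransGen.lift (p := fun a b => ∀ i, r i (a i) (b i))
        (Function.update w j) (fun a b hab i => ?_) _ _ (h j)
      · rwa [Function.onFun, ← Finset.piecewise_eq_of_notMem s v u hj,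
          Function.update_eq_self] at this
      · rcases eq_or_ne i j with rfl | hij
        · simpa using hab
        · simpa [Function.update_of_ne hij] using hw i
    rw [Finset.piecewise_insert]
    exact ih.trans hmove

namespace NSIT

variable {Ω 𝒳 𝒴 : Type*}

lemma IsUncertaintyFn.mono {m : Set 𝒳 → ℝ} (hm : IsUncertaintyFn m) {S T : Set 𝒳}
    (h : S ⊆ T) : m S ≤ m T :=
  (le_max_left _ _).trans <| (union_eq_self_of_subset_left h) ▸ hm.2.2 S T

lemma IsUncertaintyFn.nonempty_of_ne_zero {m : Set 𝒳 → ℝ} (hm : IsUncertaintyFn m)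
    {S : Set 𝒳} (h : m S ≠ 0) : S.Nonempty :=
  nonempty_iff_ne_empty.2 fun hS => h (hS ▸ hm.1)

lemma mem_range_of_mem_condRange {X : Ω → 𝒳} {Y : Ω → 𝒴} {x : 𝒳} {y : 𝒴}
    (h : x ∈ condRange X Y y) : y ∈ range Y := by
  obtain ⟨ω, hω, -⟩ := h
  exact ⟨ω, hω⟩

/-- One link of the chains in `Conn`. -/
def CondOverlap (mX : Set 𝒳 → ℝ) (X : Ω → 𝒳) (Y : Ω → 𝒴) (δ : ℝ) (y₁ y₂ : 𝒴) : Prop :=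
  δ < mX (condRange X Y y₂ ∩ condRange X Y y₁) / mX (range X)

section CondOverlap

variable {mX : Set 𝒳 → ℝ} {X : Ω → 𝒳} {Y : Ω → 𝒴} {δ : ℝ}

theorem conn_iff_exists_reflTransGen {x₁ x₂ : 𝒳} :
    Conn mX X Y δ x₁ x₂ ↔ ∃ y₁ y₂, x₁ ∈ condRange X Y y₁ ∧ x₂ ∈ condRange X Y y₂ ∧
      ReflTransGen (CondOverlap mX X Y δ) y₁ y₂ := by
  simp only [reflTransGen_iff_exists_fin_chain]
  constructor
  · rintro ⟨N, ys, h₁, h₂, hys⟩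
    exact ⟨_, _, h₁, h₂, N, ys, rfl, rfl, hys⟩
  · rintro ⟨_, _, h₁, h₂, N, ys, rfl, rfl, hys⟩
    exact ⟨N, ys, h₁, h₂, hys⟩

theorem CondOverlap.mem_range (hm : IsUncertaintyFn mX) (hδ : 0 ≤ δ) {y₁ y₂ : 𝒴}
    (h : CondOverlap mX X Y δ y₁ y₂) : y₁ ∈ range Y ∧ y₂ ∈ range Y := by
  have hne : mX (condRange X Y y₂ ∩ condRange X Y y₁) ≠ 0 := fun h0 => by
    rw [CondOverlap, h0, zero_div] at h
    linarith
  obtain ⟨x, hx₂, hx₁⟩ := hm.nonempty_of_ne_zero hne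
  exact ⟨mem_range_of_mem_condRange hx₁, mem_range_of_mem_condRange hx₂⟩

theorem condOverlap_self (hm : IsUncertaintyFn mX) (hm1 : mX univ = 1) {y : 𝒴}
    (hy : y ∈ range Y) (h : δ < mX (condRange X Y y)) : CondOverlap mX X Y δ y y := by
  obtain ⟨ω, rfl⟩ := hy
  have hpos : 0 < mX (range X) := hm.2.1 _ ⟨X ω, ω, rfl⟩
  have hle : mX (range X) ≤ 1 := hm1 ▸ hm.mono (subset_univ _)
  rw [CondOverlap, inter_self]
  exact h.trans_le (le_div_self (hm.2.1 (condRange X Y (Y ω)) ⟨X ω, ω, rfl, rfl⟩).le hpos hle)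

end CondOverlap

theorem condOverlap_pi {ι : Type*} [Fintype ι] [Nonempty ι] {m1 : Set 𝒴 → ℝ}
    {mn : Set (ι → 𝒴) → ℝ} (hm1 : IsUncertaintyFn m1) (hmn : IsUncertaintyFn mn)
    (hprod : ∀ S : ι → Set 𝒴, mn (univ.pi S) = ∏ i, m1 (S i))
    {Xv : Ω → ι → 𝒳} {Yv : Ω → ι → 𝒴}
    (hX : range Xv = univ.pi fun i => range fun ω => Xv ω i)
    (hY : ∀ xv ∈ range Xv, condRange Yv Xv xv =
      univ.pi fun i => condRange (fun ω => Yv ω i) (fun ω => Xv ω i) (xv i))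
    {δ : ℝ} (hδ : 0 ≤ δ) {u v : ι → 𝒳}
    (h : ∀ i, CondOverlap m1 (fun ω => Yv ω i) (fun ω => Xv ω i) δ (u i) (v i)) :
    CondOverlap mn Yv Xv (δ ^ Fintype.card ι) u v := by
  have hu : u ∈ range Xv := by rw [hX]; exact fun i _ => ((h i).mem_range hm1 hδ).1
  have hv : v ∈ range Xv := by rw [hX]; exact fun i _ => ((h i).mem_range hm1 hδ).2
  rw [CondOverlap, hY u hu, hY v hv, ← pi_inter_distrib, hprod]
  obtain ⟨ω, -⟩ := hu
  have hpos : ∀ i, 0 < m1 (range fun ω => Yv ω i) := fun i => hm1.2.1 _ ⟨_, ω, rfl⟩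
  have hbox : range Yv ⊆ univ.pi fun i => range fun ω => Yv ω i := by
    rintro _ ⟨ω, rfl⟩ i _
    exact ⟨ω, rfl⟩
  rw [lt_div_iff₀ (hmn.2.1 (range Yv) ⟨_, ω, rfl⟩)]
  calc δ ^ Fintype.card ι * mn (range Yv)
      ≤ δ ^ Fintype.card ι * mn (univ.pi fun i => range fun ω => Yv ω i) := by
        gcongr
        exact hmn.mono hbox
    _ = ∏ i, δ * m1 (range fun ω => Yv ω i) := by
        rw [hprod, Finset.prod_mul_distrib, Finset.prod_const, Finset.card_univ]
    _ < ∏ i, m1 (condRange (fun ω => Yv ω i) (fun ω => Xv ω i) (v i) ∩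
          condRange (fun ω => Yv ω i) (fun ω => Xv ω i) (u i)) :=
        Finset.prod_lt_prod_of_nonempty_of_nonneg (fun i _ => mul_nonneg hδ (hpos i).le)
          (fun i _ => (lt_div_iff₀ (hpos i)).1 (h i)) Finset.univ_nonempty

theorem product_family_connected_general
    {Ω 𝒳 𝒴 : Type*} {n : ℕ}
    (m1 : Set 𝒴 → ℝ) (mn : Set (Fin n → 𝒴) → ℝ)
    (hm1 : IsUncertaintyFn m1) (hmn : IsUncertaintyFn mn)
    (hprod : ∀ S : Fin n → Set 𝒴, mn (Set.univ.pi S) = ∏ i, m1 (S i))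
    (hm1univ : m1 Set.univ = 1)
    (Xv : Ω → Fin n → 𝒳) (Yv : Ω → Fin n → 𝒴) (δ : ℝ)
    (hX : Set.range Xv = Set.univ.pi fun i => Set.range fun ω => Xv ω i)
    (hY : ∀ xv ∈ Set.range Xv,
      condRange Yv Xv xv =
        Set.univ.pi fun i =>
          condRange (fun ω => Yv ω i) (fun ω => Xv ω i) (xv i))
    (hδ0 : 0 ≤ δ)
    (hδ : δ < sInf {r | ∃ i : Fin n, ∃ x ∈ Set.range fun ω => Xv ω i,
      r = m1 (condRange (fun ω => Yv ω i) (fun ω => Xv ω i) x)})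
    (F : Fin n → Set (Set 𝒴))
    (hF : ∀ i, IsOverlapFamily m1 (fun ω => Yv ω i) (fun ω => Xv ω i) δ (F i))
    (g : Fin n → Set 𝒴) (hg : ∀ i, g i ∈ F i) :
    (∀ y₁ ∈ Set.univ.pi g, ∀ y₂ ∈ Set.univ.pi g,
      Conn mn Yv Xv (δ ^ n) y₁ y₂) ∧
    ∃ xv ∈ Set.range Xv, condRange Yv Xv xv ⊆ Set.univ.pi g := by
  -- For `n = 0` the infimum is `sInf ∅ = 0`.
  have : Nonempty (Fin n) := by
    by_contra hempty
    have : IsEmpty (Fin n) := not_nonempty_iff.1 hempty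
    simp only [IsEmpty.exists_iff, ofPred_false, Real.sInf_empty] at hδ
    linarith
  have hself : ∀ i, ∀ x ∈ range fun ω => Xv ω i,
      CondOverlap m1 (fun ω => Yv ω i) (fun ω => Xv ω i) δ x x := by
    refine fun i x hx => condOverlap_self hm1 hm1univ hx <|
      hδ.trans_le (csInf_le ⟨0, ?_⟩ ⟨i, x, hx, rfl⟩)
    rintro _ ⟨j, _, ⟨ω, rfl⟩, rfl⟩
    exact (hm1.2.1 (condRange _ _ _) ⟨Yv ω j, ω, rfl, rfl⟩).le
  have hXmem : ∀ xv : Fin n → 𝒳, (∀ i, xv i ∈ range fun ω => Xv ω i) → xv ∈ range Xv :=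
    fun xv h => by rw [hX]; exact fun i _ => h i
  have hmem : ∀ xv : Fin n → 𝒳, ∀ y : Fin n → 𝒴,
      (∀ i, y i ∈ condRange (fun ω => Yv ω i) (fun ω => Xv ω i) (xv i)) →
      y ∈ condRange Yv Xv xv := fun xv y hy => by
    rw [hY xv (hXmem xv fun i => mem_range_of_mem_condRange (hy i))]
    exact fun i _ => hy i
  refine ⟨fun y₁ hy₁ y₂ hy₂ => ?_, ?_⟩
  · choose a b ha hb hab using fun i => conn_iff_exists_reflTransGen.1 <|
      ((hF i).2.1 (g i) (hg i)).1 (y₁ i) (hy₁ i trivial) (y₂ i) (hy₂ i trivial)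
    have hpath := ReflTransGen.pi (fun i => hself i _ (mem_range_of_mem_condRange (ha i)))
      (fun i => hself i _ (mem_range_of_mem_condRange (hb i))) hab
    refine conn_iff_exists_reflTransGen.2 ⟨a, b, hmem a y₁ ha, hmem b y₂ hb,
      ReflTransGen.mono (fun u v huv => ?_) _ _ hpath⟩
    simpa using condOverlap_pi hm1 hmn hprod hX hY hδ0 huv
  · choose xv hxv hsub using fun i => ((hF i).2.1 (g i) (hg i)).2
    refine ⟨xv, hXmem xv hxv, ?_⟩
    rw [hY xv (hXmem xv hxv)]
    exact pi_mono fun i _ => hsub i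

/-- Lemma 2, parts 2: under the product uncertainty assumption,
every member of the product of per-coordinate `δ`-overlap families is
`δⁿ`-connected via `⟦Y(1:n)|X(1:n)⟧` and contains a singly `δⁿ`-connected set of
the form `⟦Y(1:n)|x(1:n)⟧`. -/
theorem product_family_connected
    {Ω 𝒳 𝒴 : Type*} {n : ℕ}
    (m1 : Set 𝒴 → ℝ) (mn : Set (Fin n → 𝒴) → ℝ)
    (hm1 : IsUncertaintyFn m1) (hmn : IsUncertaintyFn mn)
    (hprod : ∀ S : Fin n → Set 𝒴, mn (Set.univ.pi S) = ∏ i, m1 (S i))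
    (hm1univ : m1 Set.univ = 1) (hmnuniv : mn Set.univ = 1)
    (Xv : Ω → Fin n → 𝒳) (Yv : Ω → Fin n → 𝒴) (δ : ℝ)
    (hX : Set.range Xv = Set.univ.pi fun i => Set.range fun ω => Xv ω i)
    (hY : ∀ xv ∈ Set.range Xv,
      condRange Yv Xv xv =
        Set.univ.pi fun i =>
          condRange (fun ω => Yv ω i) (fun ω => Xv ω i) (xv i))
    (hδ0 : 0 ≤ δ)
    (hδ : δ < sInf {r | ∃ i : Fin n, ∃ x ∈ Set.range fun ω => Xv ω i,
      r = m1 (condRange (fun ω => Yv ω i) (fun ω => Xv ω i) x)})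
    (F : Fin n → Set (Set 𝒴))
    (hF : ∀ i, IsOverlapFamily m1 (fun ω => Yv ω i) (fun ω => Xv ω i) δ (F i))
    (g : Fin n → Set 𝒴) (hg : ∀ i, g i ∈ F i) :
    (∀ y₁ ∈ Set.univ.pi g, ∀ y₂ ∈ Set.univ.pi g,
      Conn mn Yv Xv (δ ^ n) y₁ y₂) ∧
    ∃ xv ∈ Set.range Xv, condRange Yv Xv xv ⊆ Set.univ.pi g :=
  product_family_connected_general m1 mn hm1 hmn hprod hm1univ Xv Yv δ hX hY hδ0 hδ F hF g hg

end NSIT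
end

section
/- Under the product uncertainty and union-bound assumptions, let X(1:n) and Y(1:n) satisfy the factorization conditions, and suppose the association set 𝒜(Y(1:n);X(1:n)) is empty or all nonzero intersection ratios are classified so that either (X(1:n),Y(1:n)) is disassociated at (0,0) or associated at (1,0). Then the 0-mutual information factorizes exactly: I₀(Y(1:n); X(1:n)) = Σ_{i=1}^n I₀(Y(i); X(i)), where I₀ is the logarithm of the cardinality of the 0-overlap family. (Zero-error mutual information is additive over independent coordinates of a stationary memoryless uncertain channel.) -/
open Set Real

namespace NSIT

variable {Ω 𝒳 𝒴 : Type*}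

/-!
At `δ = 0` an overlap of positive uncertainty is just a nonempty overlap, so the members of a
`0`-overlap family are pairwise disjoint and are exactly the classes of `Ω` under the relation
"the conditioning values are joined by a chain of pairwise meeting conditional ranges".
For a channel whose input range and conditional output ranges are boxes, two boxes meet iff
they meet in every coordinate, and a chain in the product can be built by changing one
coordinate at a time; so these classes for `n` uses are `n`-tuples of classes for one use, and
`|⟦Y(1:n)|X(1:n)⟧*₀| = ∏ᵢ |⟦Y(i)|X(i)⟧*₀|`.
-/

lemma nat_card_eq_of_surjective_of_eq_iff {α β γ : Type*} {f : α → β} {g : α → γ}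
    (hf : Function.Surjective f) (hg : Function.Surjective g)
    (h : ∀ a b, f a = f b ↔ g a = g b) : Nat.card β = Nat.card γ :=
  Nat.card_congr <| (Setoid.quotientKerEquivOfSurjective f hf).symm.trans <|
    (Quotient.congrRight h).trans (Setoid.quotientKerEquivOfSurjective g hg)

lemma reflTransGen_of_fin_chain {α : Type*} {R : α → α → Prop} :
    ∀ {N : ℕ} (ys : Fin (N + 1) → α), (∀ i : Fin N, R (ys i.castSucc) (ys i.succ)) →
      Relation.ReflTransGen R (ys 0) (ys (Fin.last N))
  | 0, _, _ => .refl
  | N + 1, ys, h =>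
    (reflTransGen_of_fin_chain (fun j => ys j.castSucc) fun i => h i.castSucc).tail
      (h (Fin.last N))

section CondRange

variable {X : Ω → 𝒳} {Y : Ω → 𝒴}

lemma mem_condRange_self (ω : Ω) : X ω ∈ condRange X Y (Y ω) :=
  ⟨ω, rfl, rfl⟩

lemma condRange_subset_range (y : 𝒴) : condRange X Y y ⊆ range X :=
  image_subset_range _ _

lemma condRange_nonempty_iff {y : 𝒴} : (condRange X Y y).Nonempty ↔ y ∈ range Y := by
  simp [condRange, Set.Nonempty, eq_comm]

/-- At `δ = 0` the chains of `Conn` are exactly the chains of this relation. -/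
def CondRangesMeet (X : Ω → 𝒳) (Y : Ω → 𝒴) (y₁ y₂ : 𝒴) : Prop :=
  (condRange X Y y₁ ∩ condRange X Y y₂).Nonempty

lemma condRangesMeet_self_iff {y : 𝒴} : CondRangesMeet X Y y y ↔ y ∈ range Y := by
  rw [CondRangesMeet, inter_self, condRange_nonempty_iff]

lemma CondRangesMeet.mem_range_left {y₁ y₂ : 𝒴} (h : CondRangesMeet X Y y₁ y₂) :
    y₁ ∈ range Y :=
  condRange_nonempty_iff.1 (h.mono inter_subset_left)

lemma CondRangesMeet.mem_range_right {y₁ y₂ : 𝒴} (h : CondRangesMeet X Y y₁ y₂) :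
    y₂ ∈ range Y :=
  condRange_nonempty_iff.1 (h.mono inter_subset_right)

lemma Conn.exists_reflTransGen {m : Set 𝒳 → ℝ} (hm : m ∅ = 0) {x₁ x₂ : 𝒳}
    (h : Conn m X Y 0 x₁ x₂) :
    ∃ a b, x₁ ∈ condRange X Y a ∧ x₂ ∈ condRange X Y b ∧
      Relation.ReflTransGen (CondRangesMeet X Y) a b := by
  obtain ⟨N, ys, h₁, h₂, hstep⟩ := h
  refine ⟨_, _, h₁, h₂, reflTransGen_of_fin_chain ys fun i => ?_⟩
  rw [CondRangesMeet, inter_comm, nonempty_iff_ne_empty]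
  intro hempty
  simpa [hempty, hm] using hstep i

end CondRange

namespace IsOverlapFamily

variable {m : Set 𝒳 → ℝ} {X : Ω → 𝒳} {Y : Ω → 𝒴} {δ : ℝ} {F : Set (Set 𝒳)}

lemma exists_mem (hF : IsOverlapFamily m X Y δ F) {x : 𝒳} (hx : x ∈ range X) :
    ∃ S ∈ F, x ∈ S := by
  rwa [← hF.1, mem_sUnion] at hx

lemma nonempty [Nonempty Ω] (hF : IsOverlapFamily m X Y δ F) : F.Nonempty :=
  let ⟨S, hS, _⟩ := hF.exists_mem (mem_range_self (Classical.arbitrary Ω))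
  ⟨S, hS⟩

lemma eq_empty_of_isEmpty [IsEmpty Ω] (hF : IsOverlapFamily m X Y δ F) : F = ∅ :=
  eq_empty_of_forall_notMem fun S hS => by
    obtain ⟨_, ⟨ω, -⟩, -⟩ := (hF.2.1 S hS).2
    exact isEmptyElim ω

variable (hm : IsUncertaintyFn m) (hF : IsOverlapFamily m X Y 0 F)
include hm hF

lemma eq_of_mem_of_mem {S₁ S₂ : Set 𝒳} {x : 𝒳} (hS₁ : S₁ ∈ F) (hS₂ : S₂ ∈ F)
    (h₁ : x ∈ S₁) (h₂ : x ∈ S₂) : S₁ = S₂ := by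
  by_contra hne
  have hle := hF.2.2.1 S₁ hS₁ S₂ hS₂ hne
  rw [zero_mul] at hle
  exact hle.not_gt (hm.2.1 _ ⟨x, h₁, h₂⟩)

lemma eq_of_mem_condRange {S₁ S₂ : Set 𝒳} {x₁ x₂ : 𝒳} {y : 𝒴} (hS₁ : S₁ ∈ F) (hS₂ : S₂ ∈ F)
    (h₁ : x₁ ∈ S₁ ∩ condRange X Y y) (h₂ : x₂ ∈ S₂ ∩ condRange X Y y) : S₁ = S₂ := by
  obtain ⟨T, hT, hsub⟩ := hF.2.2.2 y (condRange_nonempty_iff.1 ⟨x₁, h₁.2⟩)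
  exact (eq_of_mem_of_mem hm hF hS₁ hT h₁.1 (hsub h₁.2)).trans
    (eq_of_mem_of_mem hm hF hT hS₂ (hsub h₂.2) h₂.1)

lemma eq_of_reflTransGen {S₁ S₂ : Set 𝒳} {x₁ x₂ : 𝒳} {y₁ y₂ : 𝒴} (hS₁ : S₁ ∈ F)
    (hS₂ : S₂ ∈ F) (h₁ : x₁ ∈ S₁ ∩ condRange X Y y₁) (h₂ : x₂ ∈ S₂ ∩ condRange X Y y₂)
    (h : Relation.ReflTransGen (CondRangesMeet X Y) y₁ y₂) : S₁ = S₂ := by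
  induction h generalizing S₂ x₂ with
  | refl => exact eq_of_mem_condRange hm hF hS₁ hS₂ h₁ h₂
  | tail _ hmeet ih =>
    obtain ⟨z, hzb, hzc⟩ := hmeet
    obtain ⟨T, hT, hzT⟩ := hF.exists_mem (condRange_subset_range _ hzc)
    exact (ih hT ⟨hzT, hzb⟩).trans (eq_of_mem_condRange hm hF hT hS₂ ⟨hzT, hzc⟩ h₂)

lemma eq_iff_reflTransGen {S₁ S₂ : Set 𝒳} {ω₁ ω₂ : Ω} (hS₁ : S₁ ∈ F) (hS₂ : S₂ ∈ F)
    (h₁ : X ω₁ ∈ S₁) (h₂ : X ω₂ ∈ S₂) :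
    S₁ = S₂ ↔ Relation.ReflTransGen (CondRangesMeet X Y) (Y ω₁) (Y ω₂) := by
  refine ⟨fun h => ?_, eq_of_reflTransGen hm hF hS₁ hS₂ ⟨h₁, mem_condRange_self ω₁⟩
    ⟨h₂, mem_condRange_self ω₂⟩⟩
  subst h
  obtain ⟨a, b, ha, hb, hab⟩ := ((hF.2.1 S₁ hS₁).1 _ h₁ _ h₂).exists_reflTransGen hm.1
  exact (hab.head ⟨_, mem_condRange_self ω₁, ha⟩).tail ⟨_, hb, mem_condRange_self ω₂⟩

lemma exists_surjective_eq_iff_reflTransGen :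
    ∃ c : Ω → F, Function.Surjective c ∧
      ∀ ω₁ ω₂, c ω₁ = c ω₂ ↔ Relation.ReflTransGen (CondRangesMeet X Y) (Y ω₁) (Y ω₂) := by
  choose c hcF hc using fun ω => hF.exists_mem (mem_range_self ω)
  refine ⟨fun ω => ⟨c ω, hcF ω⟩, fun S => ?_, fun ω₁ ω₂ =>
    Subtype.ext_iff.trans (eq_iff_reflTransGen hm hF (hcF _) (hcF _) (hc _) (hc _))⟩
  obtain ⟨_, ⟨ω, rfl⟩, hsub⟩ := (hF.2.1 S S.2).2
  exact ⟨ω, Subtype.ext <|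
    eq_of_mem_of_mem hm hF (hcF ω) S.2 (hc ω) (hsub (mem_condRange_self ω))⟩

end IsOverlapFamily

section Product

variable {ι : Type*} {X : Ω → ι → 𝒳} {Y : Ω → ι → 𝒴}

lemma CondRangesMeet.eval {y₁ y₂ : ι → 𝒴} (h : CondRangesMeet X Y y₁ y₂) (i : ι) :
    CondRangesMeet (X · i) (Y · i) (y₁ i) (y₂ i) := by
  obtain ⟨_, ⟨ω₁, hω₁, rfl⟩, ω₂, hω₂, hx⟩ := h
  exact ⟨X ω₁ i, ⟨ω₁, congrFun hω₁ i, rfl⟩, ω₂, congrFun hω₂ i, congrFun hx i⟩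

variable (hrange : range Y = univ.pi fun i => range (Y · i))
  (hcond : ∀ y ∈ range Y, condRange X Y y = univ.pi fun i => condRange (X · i) (Y · i) (y i))
include hcond

lemma condRangesMeet_pi_iff {y₁ y₂ : ι → 𝒴} (h₁ : y₁ ∈ range Y) (h₂ : y₂ ∈ range Y) :
    CondRangesMeet X Y y₁ y₂ ↔ ∀ i, CondRangesMeet (X · i) (Y · i) (y₁ i) (y₂ i) := by
  rw [CondRangesMeet, hcond _ h₁, hcond _ h₂, ← pi_inter_distrib, univ_pi_nonempty_iff]
  rfl

include hrange

lemma condRangesMeet_update [DecidableEq ι] {y : ι → 𝒴} (hy : y ∈ range Y) {j : ι} {b c : 𝒴}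
    (h : CondRangesMeet (X · j) (Y · j) b c) :
    CondRangesMeet X Y (Function.update y j b) (Function.update y j c) := by
  rw [hrange] at hy
  have hmem : ∀ d ∈ range (Y · j), Function.update y j d ∈ range Y := fun d hd => by
    rw [hrange, update_mem_pi_iff_of_mem hy]
    exact fun _ => hd
  rw [condRangesMeet_pi_iff hcond (hmem _ h.mem_range_left) (hmem _ h.mem_range_right)]
  intro i
  rcases eq_or_ne i j with rfl | hij
  · simpa using h
  · simpa [hij] using condRangesMeet_self_iff.2 (hy i (mem_univ i))

lemma reflTransGen_update [DecidableEq ι] {y : ι → 𝒴} (hy : y ∈ range Y) {j : ι} {b : 𝒴}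
    (h : Relation.ReflTransGen (CondRangesMeet (X · j) (Y · j)) (y j) b) :
    Relation.ReflTransGen (CondRangesMeet X Y) y (Function.update y j b) := by
  induction h with
  | refl => rw [Function.update_eq_self]
  | tail _ hcd ih => exact ih.tail (condRangesMeet_update hrange hcond hy hcd)

lemma reflTransGen_condRangesMeet_pi_iff [Fintype ι] [DecidableEq ι] {y₁ y₂ : ι → 𝒴}
    (h₁ : y₁ ∈ range Y) (h₂ : y₂ ∈ range Y) :
    Relation.ReflTransGen (CondRangesMeet X Y) y₁ y₂ ↔
      ∀ i, Relation.ReflTransGen (CondRangesMeet (X · i) (Y · i)) (y₁ i) (y₂ i) := by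
  refine ⟨fun h i => h.lift (· i) fun _ _ hab => hab.eval i, fun h => ?_⟩
  -- walk from `y₁` to `y₂` one coordinate at a time
  suffices ∀ s : Finset ι, Relation.ReflTransGen (CondRangesMeet X Y) y₁ (s.piecewise y₂ y₁) by
    simpa using this Finset.univ
  intro s
  induction s using Finset.induction_on with
  | empty => simp [Relation.ReflTransGen.refl]
  | insert j s hj ih =>
    have hmem : s.piecewise y₂ y₁ ∈ range Y := by
      rw [hrange] at h₁ h₂ ⊢
      exact s.piecewise_mem_set_pi h₂ h₁
    rw [Finset.piecewise_insert]
    refine ih.trans (reflTransGen_update hrange hcond hmem ?_)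
    rw [Finset.piecewise_eq_of_notMem _ _ _ hj]
    exact h j

theorem IsOverlapFamily.ncard_eq_prod_ncard [Fintype ι] [DecidableEq ι]
    {m : Set (ι → 𝒳) → ℝ} {mᵢ : ι → Set 𝒳 → ℝ} (hm : IsUncertaintyFn m)
    (hmᵢ : ∀ i, IsUncertaintyFn (mᵢ i)) {F : Set (Set (ι → 𝒳))} {Fᵢ : ι → Set (Set 𝒳)}
    (hF : IsOverlapFamily m X Y 0 F) (hFᵢ : ∀ i, IsOverlapFamily (mᵢ i) (X · i) (Y · i) 0 (Fᵢ i)) :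
    F.ncard = ∏ i, (Fᵢ i).ncard := by
  obtain ⟨c, hc, hc_eq⟩ := hF.exists_surjective_eq_iff_reflTransGen hm
  choose cᵢ hcᵢ hcᵢ_eq using fun i => (hFᵢ i).exists_surjective_eq_iff_reflTransGen (hmᵢ i)
  have hsurj : Function.Surjective fun ω i => cᵢ i ω := by
    intro S
    choose ω hω using fun i => hcᵢ i (S i)
    obtain ⟨ω₀, hω₀⟩ : (fun i => Y (ω i) i) ∈ range Y := by
      rw [hrange]
      exact fun i _ => mem_range_self _
    refine ⟨ω₀, funext fun i => ?_⟩
    rw [← hω i, hcᵢ_eq, congrFun hω₀ i]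
  simp only [← Nat.card_coe_set_eq, ← Nat.card_pi]
  refine nat_card_eq_of_surjective_of_eq_iff hc hsurj fun ω₁ ω₂ => ?_
  rw [hc_eq, reflTransGen_condRangesMeet_pi_iff hrange hcond (mem_range_self _)
    (mem_range_self _), funext_iff]
  simp only [hcᵢ_eq]

end Product

theorem zero_error_information_factorizes_general
    {Ω 𝒳 𝒴 : Type*} {n : ℕ}
    (m1 : Set 𝒴 → ℝ) (mn : Set (Fin n → 𝒴) → ℝ)
    (hm1 : IsUncertaintyFn m1) (hmn : IsUncertaintyFn mn)
    (Xv : Ω → Fin n → 𝒳) (Yv : Ω → Fin n → 𝒴)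
    (hX : Set.range Xv = Set.univ.pi fun i => Set.range fun ω => Xv ω i)
    (hY : ∀ xv ∈ Set.range Xv,
      condRange Yv Xv xv =
        Set.univ.pi fun i =>
          condRange (fun ω => Yv ω i) (fun ω => Xv ω i) (xv i))
    (Fn : Set (Set (Fin n → 𝒴))) (hFn : IsOverlapFamily mn Yv Xv 0 Fn)
    (F : Fin n → Set (Set 𝒴))
    (hF : ∀ i, IsOverlapFamily m1 (fun ω => Yv ω i) (fun ω => Xv ω i) 0 (F i))
    (hFfin : ∀ i, (F i).Finite) :
    Real.logb 2 (Fn.ncard : ℝ) = ∑ i, Real.logb 2 ((F i).ncard : ℝ) := by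
  rcases isEmpty_or_nonempty Ω with hΩ | hΩ
  · simp [hFn.eq_empty_of_isEmpty, fun i => (hF i).eq_empty_of_isEmpty]
  have hF_ne_zero : ∀ i, ((F i).ncard : ℝ) ≠ 0 := fun i => by
    exact_mod_cast ((ncard_pos (hFfin i)).2 (hF i).nonempty).ne'
  rw [hFn.ncard_eq_prod_ncard hX hY hmn (fun _ => hm1) hF, Nat.cast_prod,
    Real.logb_prod _ _ fun i _ => hF_ne_zero i]

/-- Corollary 1: under the product and union-bound assumptions,
for a stationary memoryless uncertain channel the zero-error mutual information
factorizes exactly: `I₀(Y(1:n);X(1:n)) = Σᵢ I₀(Y(i);X(i))`, where `I₀` is the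
base-two logarithm of the cardinality of the `0`-overlap family. -/
theorem zero_error_information_factorizes
    {Ω 𝒳 𝒴 : Type*} {n : ℕ}
    (m1 : Set 𝒴 → ℝ) (mn : Set (Fin n → 𝒴) → ℝ) (mXn : Set (Fin n → 𝒳) → ℝ)
    (hm1 : IsUncertaintyFn m1) (hmn : IsUncertaintyFn mn)
    (hmXn : IsUncertaintyFn mXn)
    (hprod : ∀ S : Fin n → Set 𝒴, mn (Set.univ.pi S) = ∏ i, m1 (S i))
    (hsub1 : ∀ S₁ S₂ : Set 𝒴, m1 (S₁ ∪ S₂) ≤ m1 S₁ + m1 S₂)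
    (hsubn : ∀ S₁ S₂ : Set (Fin n → 𝒴), mn (S₁ ∪ S₂) ≤ mn S₁ + mn S₂)
    (Xv : Ω → Fin n → 𝒳) (Yv : Ω → Fin n → 𝒴)
    (hX : Set.range Xv = Set.univ.pi fun i => Set.range fun ω => Xv ω i)
    (hY : ∀ xv ∈ Set.range Xv,
      condRange Yv Xv xv =
        Set.univ.pi fun i =>
          condRange (fun ω => Yv ω i) (fun ω => Xv ω i) (xv i))
    (hdich : Disassociated mXn mn Xv Yv 0 0 ∨ Associated mXn mn Xv Yv 1 0)
    (Fn : Set (Set (Fin n → 𝒴))) (hFn : IsOverlapFamily mn Yv Xv 0 Fn)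
    (hFnfin : Fn.Finite)
    (F : Fin n → Set (Set 𝒴))
    (hF : ∀ i, IsOverlapFamily m1 (fun ω => Yv ω i) (fun ω => Xv ω i) 0 (F i))
    (hFfin : ∀ i, (F i).Finite) :
    Real.logb 2 (Fn.ncard : ℝ) = ∑ i, Real.logb 2 ((F i).ncard : ℝ) :=
  zero_error_information_factorizes_general m1 mn hm1 hmn Xv Yv hX hY Fn hFn F hF hFfin

end NSIT
end
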